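/- Let L₁, L₂, σ² > 0 and γ₁, γ₂ ∈ (0,1) with γ₁ + γ₂ = 1. Then ∫_0^∞ ∫_0^∞ (1/4) e^{-x₁/2} e^{-x₂/2} · min{ log₂(1 + γ₁L₁x₁/(γ₂L₁x₁ + 2σ²)), log₂(1 + γ₁L₂x₂/(γ₂L₂x₂ + 2σ²)) } dx₁ dx₂ ≤ min{ C₁(L₁/σ²) − C₁(γ₂L₁/σ²), C₁(L₂/σ²) − C₁(γ₂L₂/σ²) }. (This is the upper bound on the ergodic rate of the weak user's message in conventional NOMA.) -/

import Mathlib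

/-!
Since `min (f x₁) (g x₂) ≤ f x₁` and the density `e^{-x/2}/2` has total mass one, integrating out
`x₂` bounds the double integral by the single-user mean `E log₂ (1 + γ₁ L X / (γ₂ L X + 2σ²))`, and
symmetrically with the roles of the two users exchanged. Because `γ₁ + γ₂ = 1` this rate is
`log₂ (1 + (L/σ²) X/2) - log₂ (1 + (γ₂L/σ²) X/2)`, and each mean is a value of `C1`: integrating
`e^{-bx} log (1 + a x)` by parts and substituting `t = 1 + a x` gives
`b⁻¹ e^{b/a} ∫₁^∞ t⁻¹ e^{-(b/a) t} dt`.
-/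

open Real MeasureTheory Set Filter Topology

/-- `C₁(x) = (1/ln 2) · e^{1/x} · ∫_1^∞ t⁻¹ e^{-t/x} dt`. -/
noncomputable def C1 (x : ℝ) : ℝ :=
  (1 / Real.log 2) * Real.exp (1 / x) * ∫ t in Set.Ioi (1:ℝ), t⁻¹ * Real.exp (-t / x)

section LaplaceLog

variable {a b : ℝ}

lemma exp_neg_mul_mul_log_one_add_le (ha : 0 ≤ a) {x : ℝ} (hx : 0 ≤ x) :
    exp (-b * x) * log (1 + a * x) ≤ a * (x * exp (-b * x)) := by
  have hlog : log (1 + a * x) ≤ a * x := by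
    linarith [log_le_sub_one_of_pos (show 0 < 1 + a * x by positivity)]
  nlinarith [exp_pos (-b * x)]

lemma log_one_add_mul_nonneg (ha : 0 ≤ a) {x : ℝ} (hx : 0 ≤ x) : 0 ≤ log (1 + a * x) :=
  log_nonneg (by nlinarith)

lemma integrableOn_exp_neg_mul_mul_log_one_add (hb : 0 < b) (ha : 0 ≤ a) :
    IntegrableOn (fun x ↦ exp (-b * x) * log (1 + a * x)) (Ioi 0) := by
  have hdom := integrableOn_rpow_mul_exp_neg_mul_rpow (s := 1) (p := 1) (by norm_num) one_pos hb
  simp only [rpow_one] at hdom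
  refine Integrable.mono' (hdom.const_mul a) (by fun_prop) ?_
  filter_upwards [ae_restrict_mem measurableSet_Ioi] with x (hx : 0 < x)
  rw [norm_of_nonneg (mul_nonneg (exp_pos _).le (log_one_add_mul_nonneg ha hx.le))]
  exact exp_neg_mul_mul_log_one_add_le ha hx.le

lemma tendsto_exp_neg_mul_mul_log_one_add (hb : 0 < b) (ha : 0 ≤ a) :
    Tendsto (fun x ↦ exp (-b * x) * log (1 + a * x)) atTop (𝓝 0) := by
  have hbound := (tendsto_rpow_mul_exp_neg_mul_atTop_nhds_zero 1 b hb).const_mul a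
  simp only [rpow_one, mul_zero] at hbound
  refine tendsto_of_tendsto_of_tendsto_of_le_of_le' tendsto_const_nhds hbound ?_ ?_ <;>
    filter_upwards [eventually_ge_atTop 0] with x hx
  · exact mul_nonneg (exp_pos _).le (log_one_add_mul_nonneg ha hx)
  · exact exp_neg_mul_mul_log_one_add_le ha hx

lemma integrableOn_exp_neg_mul_mul_div_one_add (hb : 0 < b) (ha : 0 ≤ a) :
    IntegrableOn (fun x ↦ exp (-b * x) * (a / (1 + a * x))) (Ioi 0) := by
  refine Integrable.mono' ((exp_neg_integrableOn_Ioi 0 hb).mul_const a) (by fun_prop) ?_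
  filter_upwards [ae_restrict_mem measurableSet_Ioi] with x (hx : 0 < x)
  have hax : 0 ≤ a * x := mul_nonneg ha hx.le
  rw [norm_of_nonneg (by positivity)]
  gcongr
  exact div_le_self ha (by linarith)

lemma integral_exp_neg_mul_mul_div_one_add_eq_mul_integral_log (hb : 0 < b) (ha : 0 ≤ a) :
    ∫ x in Ioi 0, exp (-b * x) * (a / (1 + a * x))
      = b * ∫ x in Ioi 0, exp (-b * x) * log (1 + a * x) := by
  have hpos : ∀ x ∈ Ioi (0 : ℝ), 0 < 1 + a * x := fun x (hx : 0 < x) ↦ by positivity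
  have hu : ∀ x ∈ Ioi (0 : ℝ), HasDerivAt (fun x ↦ exp (-b * x)) (-b * exp (-b * x)) x :=
    fun x _ ↦ by simpa [mul_comm] using ((hasDerivAt_id x).const_mul (-b)).exp
  have hv : ∀ x ∈ Ioi (0 : ℝ), HasDerivAt (fun x ↦ log (1 + a * x)) (a / (1 + a * x)) x :=
    fun x hx ↦ by simpa using (((hasDerivAt_id x).const_mul a).const_add 1).log (hpos x hx).ne'
  have h_zero : Tendsto (fun x ↦ exp (-b * x) * log (1 + a * x)) (𝓝[>] 0) (𝓝 0) := by
    have hc : ContinuousAt (fun x ↦ exp (-b * x) * log (1 + a * x)) 0 :=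
      ContinuousAt.mul (by fun_prop) (ContinuousAt.log (by fun_prop) (by simp))
    simpa using hc.tendsto.mono_left nhdsWithin_le_nhds
  have hu'v : IntegrableOn (fun x ↦ -b * exp (-b * x) * log (1 + a * x)) (Ioi 0) := by
    simpa only [mul_assoc, IntegrableOn] using
      (integrableOn_exp_neg_mul_mul_log_one_add hb ha).const_mul (-b)
  rw [integral_Ioi_mul_deriv_eq_deriv_mul hu hv (integrableOn_exp_neg_mul_mul_div_one_add hb ha)
    hu'v h_zero (tendsto_exp_neg_mul_mul_log_one_add hb ha)]
  simp only [mul_assoc, integral_const_mul]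
  ring

lemma integral_exp_neg_mul_mul_div_one_add (ha : 0 < a) :
    ∫ x in Ioi 0, exp (-b * x) * (a / (1 + a * x))
      = exp (b / a) * ∫ t in Ioi 1, t⁻¹ * exp (-(b / a) * t) := by
  have himage : (fun x ↦ 1 + a * x) '' Ioi 0 = Ioi 1 := by
    rw [← image_image (1 + ·) (a * ·), image_mul_left_Ioi ha, image_const_add_Ioi, mul_zero,
      add_zero]
  have hderiv : ∀ x ∈ Ioi (0 : ℝ), HasDerivWithinAt (fun x ↦ 1 + a * x) a (Ioi 0) x :=
    fun x _ ↦ by simpa using (((hasDerivAt_id x).const_mul a).const_add 1).hasDerivWithinAt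
  have hinj : InjOn (fun x ↦ 1 + a * x) (Ioi 0) :=
    fun x _ y _ hxy ↦ mul_left_cancel₀ ha.ne' (add_left_cancel hxy)
  rw [← integral_const_mul, ← himage,
    integral_image_eq_integral_abs_deriv_smul measurableSet_Ioi hderiv hinj]
  refine setIntegral_congr_fun measurableSet_Ioi fun x (hx : 0 < x) ↦ ?_
  have hexp : exp (-b * x) = exp (b / a) * exp (-(b / a) * (1 + a * x)) := by
    rw [← exp_add]; congr 1; field_simp; ring
  have : 0 < 1 + a * x := by positivity
  rw [hexp, abs_of_pos ha, smul_eq_mul]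
  field_simp

theorem integral_exp_neg_mul_mul_log_one_add (hb : 0 < b) (ha : 0 < a) :
    ∫ x in Ioi 0, exp (-b * x) * log (1 + a * x)
      = b⁻¹ * exp (b / a) * ∫ t in Ioi 1, t⁻¹ * exp (-(b / a) * t) := by
  rw [mul_assoc, ← integral_exp_neg_mul_mul_div_one_add ha,
    integral_exp_neg_mul_mul_div_one_add_eq_mul_integral_log hb ha.le, inv_mul_cancel_left₀ hb.ne']

end LaplaceLog

section MinBound

variable {α β : Type*} [MeasurableSpace α] [MeasurableSpace β] {μ : Measure α} {ν : Measure β}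
  {p f : α → ℝ} {q g : β → ℝ}

lemma ae_integral_mul_mul_min_nonneg (hp : 0 ≤ᵐ[μ] p) (hq : 0 ≤ᵐ[ν] q) (hf : 0 ≤ᵐ[μ] f)
    (hg : 0 ≤ᵐ[ν] g) : 0 ≤ᵐ[μ] fun x ↦ ∫ y, p x * q y * min (f x) (g y) ∂ν := by
  filter_upwards [hp, hf] with x hpx hfx
  refine integral_nonneg_of_ae ?_
  filter_upwards [hq, hg] with y hqy hgy
  exact mul_nonneg (mul_nonneg hpx hqy) (le_min hfx hgy)

lemma integral_integral_mul_mul_min_le_left (hp : 0 ≤ᵐ[μ] p) (hq : 0 ≤ᵐ[ν] q)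
    (hf : 0 ≤ᵐ[μ] f) (hg : 0 ≤ᵐ[ν] g) (hq_int : Integrable q ν) (hq_one : ∫ y, q y ∂ν = 1)
    (hpf : Integrable (fun x ↦ p x * f x) μ) :
    ∫ x, ∫ y, p x * q y * min (f x) (g y) ∂ν ∂μ ≤ ∫ x, p x * f x ∂μ := by
  refine integral_mono_of_nonneg (ae_integral_mul_mul_min_nonneg hp hq hf hg) hpf ?_
  filter_upwards [hp, hf] with x hpx hfx
  calc ∫ y, p x * q y * min (f x) (g y) ∂ν ≤ ∫ y, p x * f x * q y ∂ν := by
        refine integral_mono_of_nonneg ?_ (hq_int.const_mul _) ?_ <;>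
          filter_upwards [hq, hg] with y hqy hgy
        · exact mul_nonneg (mul_nonneg hpx hqy) (le_min hfx hgy)
        · nlinarith [min_le_left (f x) (g y), mul_nonneg hpx hqy]
    _ = p x * f x := by rw [integral_const_mul, hq_one, mul_one]

lemma integral_integral_mul_mul_min_le_right (hp : 0 ≤ᵐ[μ] p) (hq : 0 ≤ᵐ[ν] q)
    (hf : 0 ≤ᵐ[μ] f) (hg : 0 ≤ᵐ[ν] g) (hp_int : Integrable p μ) (hp_one : ∫ x, p x ∂μ = 1)
    (hqg : Integrable (fun y ↦ q y * g y) ν) :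
    ∫ x, ∫ y, p x * q y * min (f x) (g y) ∂ν ∂μ ≤ ∫ y, q y * g y ∂ν := by
  calc ∫ x, ∫ y, p x * q y * min (f x) (g y) ∂ν ∂μ
      ≤ ∫ x, p x * ∫ y, q y * g y ∂ν ∂μ := by
        refine integral_mono_of_nonneg (ae_integral_mul_mul_min_nonneg hp hq hf hg)
          (hp_int.mul_const _) ?_
        filter_upwards [hp, hf] with x hpx hfx
        rw [← integral_const_mul]
        refine integral_mono_of_nonneg ?_ (hqg.const_mul _) ?_ <;>
          filter_upwards [hq, hg] with y hqy hgy
        · exact mul_nonneg (mul_nonneg hpx hqy) (le_min hfx hgy)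
        · nlinarith [min_le_right (f x) (g y), mul_nonneg hpx hqy]
    _ = ∫ y, q y * g y ∂ν := by rw [integral_mul_const, hp_one, one_mul]

end MinBound

lemma integral_half_exp_neg_half_mul : ∫ x in Ioi (0 : ℝ), 1 / 2 * exp (-(1 / 2) * x) = 1 := by
  rw [integral_const_mul, integral_exp_mul_Ioi (by norm_num)]
  norm_num

lemma integrableOn_half_exp_mul_logb_one_add {c : ℝ} (hc : 0 ≤ c) :
    IntegrableOn (fun x ↦ 1 / 2 * exp (-(1 / 2) * x) * logb 2 (1 + c / 2 * x)) (Ioi 0) := by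
  refine IntegrableOn.congr_fun ((integrableOn_exp_neg_mul_mul_log_one_add (b := 1 / 2)
    (by norm_num) (by positivity : 0 ≤ c / 2)).const_mul (1 / 2 / log 2)) (fun x _ ↦ ?_)
    measurableSet_Ioi
  rw [logb]
  ring

theorem integral_half_exp_mul_logb_one_add {c : ℝ} (hc : 0 < c) :
    ∫ x in Ioi 0, 1 / 2 * exp (-(1 / 2) * x) * logb 2 (1 + c / 2 * x) = C1 c := by
  calc ∫ x in Ioi 0, 1 / 2 * exp (-(1 / 2) * x) * logb 2 (1 + c / 2 * x)
      = 1 / 2 / log 2 * ∫ x in Ioi 0, exp (-(1 / 2) * x) * log (1 + c / 2 * x) := by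
        rw [← integral_const_mul]
        congr 1 with x
        rw [logb]
        ring
    _ = C1 c := by
        rw [integral_exp_neg_mul_mul_log_one_add (by norm_num) (by positivity), C1,
          show (1 / 2) / (c / 2) = 1 / c by field_simp]
        have htail : ∀ t : ℝ, t⁻¹ * exp (-(1 / c) * t) = t⁻¹ * exp (-t / c) := fun t ↦ by
          ring_nf
        simp only [htail]
        ring

section WeakUserRate

variable {L σ2 γ1 γ2 : ℝ}

lemma logb_one_add_div_eq_sub (hL : 0 ≤ L) (hσ : 0 < σ2) (hγ2 : 0 ≤ γ2) (hsum : γ1 + γ2 = 1)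
    {x : ℝ} (hx : 0 ≤ x) :
    logb 2 (1 + γ1 * L * x / (γ2 * L * x + 2 * σ2))
      = logb 2 (1 + L / σ2 / 2 * x) - logb 2 (1 + γ2 * L / σ2 / 2 * x) := by
  rw [← logb_div (by positivity) (by positivity)]
  obtain rfl : γ1 = 1 - γ2 := by linarith
  congr 1
  field_simp
  ring

lemma integrableOn_half_exp_mul_logb_one_add_div (hL : 0 ≤ L) (hσ : 0 < σ2) (hγ2 : 0 ≤ γ2)
    (hsum : γ1 + γ2 = 1) :
    IntegrableOn (fun x ↦ 1 / 2 * exp (-(1 / 2) * x) *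
      logb 2 (1 + γ1 * L * x / (γ2 * L * x + 2 * σ2))) (Ioi 0) := by
  refine ((integrableOn_half_exp_mul_logb_one_add (c := L / σ2) (by positivity)).sub
    (integrableOn_half_exp_mul_logb_one_add (c := γ2 * L / σ2) (by positivity))).congr_fun
    (fun x (hx : 0 < x) ↦ ?_) measurableSet_Ioi
  simp only [Pi.sub_apply]
  rw [logb_one_add_div_eq_sub hL hσ hγ2 hsum hx.le]
  ring

lemma integral_half_exp_mul_logb_one_add_div (hL : 0 < L) (hσ : 0 < σ2) (hγ2 : 0 < γ2)
    (hsum : γ1 + γ2 = 1) :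
    ∫ x in Ioi 0, 1 / 2 * exp (-(1 / 2) * x) * logb 2 (1 + γ1 * L * x / (γ2 * L * x + 2 * σ2))
      = C1 (L / σ2) - C1 (γ2 * L / σ2) := by
  rw [← integral_half_exp_mul_logb_one_add (by positivity),
    ← integral_half_exp_mul_logb_one_add (by positivity),
    ← integral_sub (integrableOn_half_exp_mul_logb_one_add (by positivity))
      (integrableOn_half_exp_mul_logb_one_add (by positivity))]
  refine setIntegral_congr_fun measurableSet_Ioi fun x (hx : 0 < x) ↦ ?_
  rw [logb_one_add_div_eq_sub hL.le hσ hγ2.le hsum hx.le]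
  ring

lemma ae_logb_one_add_div_nonneg (hL : 0 ≤ L) (hσ : 0 < σ2) (hγ1 : 0 ≤ γ1) (hγ2 : 0 ≤ γ2) :
    0 ≤ᵐ[volume.restrict (Ioi 0)] fun x ↦ logb 2 (1 + γ1 * L * x / (γ2 * L * x + 2 * σ2)) := by
  filter_upwards [ae_restrict_mem measurableSet_Ioi] with x (hx : 0 < x)
  refine logb_nonneg one_lt_two ?_
  have : 0 ≤ γ1 * L * x / (γ2 * L * x + 2 * σ2) := by positivity
  linarith

end WeakUserRate

theorem stmt8 (L1 L2 σ2 γ1 γ2 : ℝ) (hL1 : 0 < L1) (hL2 : 0 < L2) (hσ : 0 < σ2)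
    (hγ1 : γ1 ∈ Set.Ioo (0:ℝ) 1) (hγ2 : γ2 ∈ Set.Ioo (0:ℝ) 1) (hsum : γ1 + γ2 = 1) :
    (∫ x1 in Set.Ioi (0:ℝ), ∫ x2 in Set.Ioi (0:ℝ),
      (1/4) * Real.exp (-x1/2) * Real.exp (-x2/2) *
        min (Real.logb 2 (1 + γ1 * L1 * x1 / (γ2 * L1 * x1 + 2 * σ2)))
            (Real.logb 2 (1 + γ1 * L2 * x2 / (γ2 * L2 * x2 + 2 * σ2))))
      ≤ min (C1 (L1 / σ2) - C1 (γ2 * L1 / σ2)) (C1 (L2 / σ2) - C1 (γ2 * L2 / σ2)) := by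
  simp only [show ∀ x : ℝ, -x / 2 = -(1 / 2) * x from fun x ↦ by ring,
    show ∀ u v : ℝ, 1 / 4 * u * v = 1 / 2 * u * (1 / 2 * v) from fun u v ↦ by ring]
  have hp : 0 ≤ᵐ[volume.restrict (Ioi 0)] fun x : ℝ ↦ 1 / 2 * exp (-(1 / 2) * x) :=
    ae_of_all _ fun x ↦ by positivity
  have hp_int : IntegrableOn (fun x : ℝ ↦ 1 / 2 * exp (-(1 / 2) * x)) (Ioi 0) :=
    (exp_neg_integrableOn_Ioi 0 (by norm_num)).const_mul _
  have hf := ae_logb_one_add_div_nonneg hL1.le hσ hγ1.1.le hγ2.1.le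
  have hg := ae_logb_one_add_div_nonneg hL2.le hσ hγ1.1.le hγ2.1.le
  refine le_min ?_ ?_
  · rw [← integral_half_exp_mul_logb_one_add_div hL1 hσ hγ2.1 hsum]
    exact integral_integral_mul_mul_min_le_left hp hp hf hg hp_int integral_half_exp_neg_half_mul
      (integrableOn_half_exp_mul_logb_one_add_div hL1.le hσ hγ2.1.le hsum)
  · rw [← integral_half_exp_mul_logb_one_add_div hL2 hσ hγ2.1 hsum]
    exact integral_integral_mul_mul_min_le_right hp hp hf hg hp_int integral_half_exp_neg_half_mul
      (integrableOn_half_exp_mul_logb_one_add_div hL2.le hσ hγ2.1.le hsum)
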